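/- arXiv:1805.01400 — 6 statements merged into one kernel-verified Lean document; each statement's English description precedes it below -/
import Mathlib

section
/- For every multiplicative character χ of k^×, one has Σ_{u∈k^×} χ(u)·Kl_u^{n;m}(ψ; (k₁,…,k_n; l₁,…,l_m), (χ₁,…,χ_n; η₁,…,η_m)) = ∏_{i=1}^{n} G(χ_i·χ^{k_i}, ψ) · ∏_{j=1}^{m} G((η_j·χ^{l_j})∘Nr, ψ̃). (Fourier transform of generalized Kloosterman sums; Proposition on Kloosterman sums, part (1).) -/
open scoped BigOperators

/-- The generalized Kloosterman sum
`Kl_u^{n;m}(ψ; (k₁,…,kₙ; l₁,…,l_m), (χ₁,…,χₙ; η₁,…,η_m))` attached to a finite field `k`,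
a quadratic extension `k'` of `k` (with norm `Nr = Algebra.norm k` and trace
`Tr = Algebra.trace k k'`), a nontrivial additive character `ψ` of `k`, weights `kk`, `ll`,
and multiplicative characters `χs`, `ηs` of `k^×`. -/
noncomputable def Kl {k k' : Type*} [Field k] [Fintype k] [DecidableEq k]
    [Field k'] [Fintype k'] [DecidableEq k'] [Algebra k k']
    (ψ : AddChar k ℂ) {n m : ℕ} (kk : Fin n → ℕ) (ll : Fin m → ℕ)
    (χs : Fin n → MulChar k ℂ) (ηs : Fin m → MulChar k ℂ) (u : kˣ) : ℂ :=
  ∑ x : Fin n → kˣ, ∑ y : Fin m → k'ˣ,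
    if (∏ i, x i ^ kk i) * (∏ j, (Units.map (Algebra.norm k : k' →* k) (y j)) ^ ll j) = u then
      ψ (∑ i, ((x i : k))) * ψ (Algebra.trace k k' (∑ j, ((y j : k')))) *
        (∏ i, χs i ((x i : k))) * (∏ j, ηs j (Algebra.norm k ((y j : k'))))
    else 0

private lemma addChar_sum' {ι : Type*} {k : Type*} [AddCommMonoid k] (ψ : AddChar k ℂ)
    (s : Finset ι) (a : ι → k) : ψ (∑ i ∈ s, a i) = ∏ i ∈ s, ψ (a i) := by
  classical
  induction s using Finset.cons_induction with
  | empty => simp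
  | cons i s hi ih => rw [Finset.sum_cons, Finset.prod_cons, AddChar.map_add_eq_mul, ih]

/-- **Fourier transform of generalized Kloosterman sums.**
For every multiplicative character `χ` of `k^×`,
`Σ_{u∈k^×} χ(u)·Kl_u^{n;m}(ψ; …) = ∏ᵢ G(χᵢ·χ^{kᵢ}, ψ) · ∏ⱼ G((ηⱼ·χ^{lⱼ})∘Nr, ψ̃)`. -/
theorem kloosterman_fourier_transform {k k' : Type*} [Field k] [Fintype k] [DecidableEq k]
    [Field k'] [Fintype k'] [DecidableEq k'] [Algebra k k']
    (h2 : Module.finrank k k' = 2)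
    (ψ : AddChar k ℂ) (hψ : ∃ a : k, ψ a ≠ 1)
    {n m : ℕ} (kk : Fin n → ℕ) (hkk : ∀ i, 0 < kk i)
    (ll : Fin m → ℕ) (hll : ∀ j, 0 < ll j)
    (χs : Fin n → MulChar k ℂ) (ηs : Fin m → MulChar k ℂ)
    (χ : MulChar k ℂ) :
    ∑ u : kˣ, χ (u : k) * Kl (k' := k') ψ kk ll χs ηs u =
      (∏ i, ∑ t : kˣ, (χs i * χ ^ kk i) ((t : k)) * ψ ((t : k))) *
        ∏ j, ∑ t : k'ˣ, (ηs j * χ ^ ll j) (Algebra.norm k ((t : k'))) *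
          ψ (Algebra.trace k k' ((t : k'))) := by
  unfold Kl
  simp_rw [Finset.mul_sum, mul_ite, mul_zero]
  rw [Finset.sum_comm]
  conv_lhs => enter [2, x]; rw [Finset.sum_comm]
  simp_rw [Finset.sum_ite_eq, Finset.mem_univ, if_true]
  rw [Fintype.prod_sum, Fintype.prod_sum, Finset.sum_mul_sum]
  refine Finset.sum_congr rfl fun x _ => Finset.sum_congr rfl fun y _ => ?_
  simp only [Units.val_mul, Units.coe_prod, Units.val_pow_eq_pow_val, Units.coe_map,
    MonoidHom.coe_coe, map_mul, map_prod, map_pow, map_sum, addChar_sum',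
    MulChar.mul_apply]
  rw [Finset.prod_mul_distrib, Finset.prod_mul_distrib, Finset.prod_mul_distrib,
    Finset.prod_mul_distrib]
  have h1 : ∀ i, (χ ^ kk i) ((x i : k)) = χ ((x i : k)) ^ kk i := fun i =>
    MulChar.pow_apply' χ (hkk i).ne' _
  have h2' : ∀ j, (χ ^ ll j) (Algebra.norm k ((y j : k'))) =
      χ (Algebra.norm k ((y j : k'))) ^ ll j := fun j =>
    MulChar.pow_apply' χ (hll j).ne' _
  simp only [h1, h2']
  ring
end

section
/- Assume q > 2. Then the function k^× → ℂ, u ↦ Kl_u^{n;m}(ψ; (k₁,…,k_n; l₁,…,l_m), (χ₁,…,χ_n; η₁,…,η_m)), is not constant. (Proposition on Kloosterman sums, part (2).) -/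
/-! If `u ↦ Kl_u` were constant, its Mellin transform `∑_u χ(u) Kl_u` at a nontrivial character
`χ` of `k^×` (one exists because `q > 2`) would vanish, since `∑_u χ(u) = 0`. On the other hand,
`χ` turns the constraint `∏ xᵢ^{kᵢ} ∏ Nr(yⱼ)^{lⱼ} = u` into a product, so the transform factors as
`∏ᵢ g(χᵢ χ^{kᵢ}, ψ) · ∏ⱼ g((ηⱼ χ^{lⱼ}) ∘ Nr, ψ ∘ Tr)`: a product of Gauss sums over `k` and `k̃`
with nontrivial additive characters (the trace is surjective), none of which vanishes. -/

open scoped BigOperators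

open Finset

theorem sum_units_eq_sum_of_apply_zero {F M : Type*} [GroupWithZero F] [Fintype F]
    [DecidableEq F] [AddCommMonoid M] {f : F → M} (hf : f 0 = 0) :
    ∑ u : Fˣ, f u = ∑ a, f a := by
  rw [← sum_erase _ hf, sum_subtype _ (p := (· ≠ 0)) (by simp) f]
  exact Fintype.sum_equiv unitsEquivNeZero _ _ fun _ => rfl

theorem AddChar.map_sum_eq_prod {A M ι : Type*} [AddCommMonoid A] [CommMonoid M]
    (ψ : AddChar A M) (s : Finset ι) (f : ι → A) : ψ (∑ i ∈ s, f i) = ∏ i ∈ s, ψ (f i) := by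
  have h := map_prod ψ.toMonoidHom (fun i => Multiplicative.ofAdd (f i)) s
  rw [← ofAdd_sum] at h
  exact h

theorem AddChar.compAddMonoidHom_ne_one {A B M : Type*} [AddMonoid A] [AddMonoid B] [Monoid M]
    {ψ : AddChar B M} (hψ : ψ ≠ 1) {f : A →+ B} (hf : Function.Surjective f) :
    ψ.compAddMonoidHom f ≠ 1 := by
  obtain ⟨b, hb⟩ := AddChar.ne_one_iff.mp hψ
  obtain ⟨a, rfl⟩ := hf b
  exact AddChar.ne_one_iff.mpr ⟨a, hb⟩

namespace MulChar

noncomputable def comap {R S R' : Type*} [CommMonoid R] [CommMonoid S] [CommMonoidWithZero R']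
    (χ : MulChar S R') (f : R →* S) : MulChar R R' :=
  ofUnitHom (χ.toUnitHom.comp (Units.map f))

theorem comap_apply_coe {R S R' : Type*} [CommMonoid R] [CommMonoid S] [CommMonoidWithZero R']
    (χ : MulChar S R') (f : R →* S) (u : Rˣ) : χ.comap f u = χ (f u) := by
  simp [comap]

theorem sum_units_eq_zero_of_ne_one {F R : Type*} [CommGroupWithZero F] [Fintype F]
    [DecidableEq F] [CommRing R] [IsDomain R] {χ : MulChar F R} (hχ : χ ≠ 1) :
    ∑ u : Fˣ, χ u = 0 := by
  rw [sum_units_eq_sum_of_apply_zero χ.map_zero]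
  exact sum_eq_zero_of_ne_one hχ

variable {F R : Type*} [Field F] [Fintype F] [DecidableEq F]

theorem sum_units_mul_addChar_ne_zero [CommRing R] [IsDomain R] [CharZero R]
    {ψ : AddChar F R} (hψ : ψ ≠ 1) (χ : MulChar F R) : ∑ u : Fˣ, χ u * ψ u ≠ 0 := by
  rw [sum_units_eq_sum_of_apply_zero (f := fun a => χ a * ψ a) (by rw [χ.map_zero, zero_mul])]
  change gaussSum χ ψ ≠ 0
  obtain rfl | hχ := eq_or_ne χ 1
  · simp [gaussSum_one_left hψ]
  · exact gaussSum_ne_zero_of_nontrivial (Nat.cast_ne_zero.mpr Fintype.card_ne_zero) hχ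
      (AddChar.IsPrimitive.of_ne_one hψ)

theorem exists_ne_one_of_two_lt_card [Field R] [IsAlgClosed R] [CharZero R]
    (hq : 2 < Fintype.card F) : ∃ χ : MulChar F R, χ ≠ 1 := by
  have : Nontrivial Fˣ :=
    Fintype.one_lt_card_iff_nontrivial.mp (by rw [Fintype.card_units]; omega)
  obtain ⟨a, ha⟩ := exists_ne (1 : Fˣ)
  obtain ⟨χ, hχ⟩ := exists_apply_ne_one_of_hasEnoughRootsOfUnity F R (a := (a : F))
    fun h => ha (Units.ext h)
  exact ⟨χ, ne_one_iff.mpr ⟨a, hχ⟩⟩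

end MulChar

theorem sum_mulChar_mul_Kl {k k' : Type*} [Field k] [Fintype k] [DecidableEq k] [Field k']
    [Fintype k'] [DecidableEq k'] [Algebra k k'] (ψ : AddChar k ℂ) {n m : ℕ} (kk : Fin n → ℕ)
    (ll : Fin m → ℕ) (χs : Fin n → MulChar k ℂ) (ηs : Fin m → MulChar k ℂ)
    (χ : MulChar k ℂ) :
    ∑ u : kˣ, χ u * Kl (k' := k') ψ kk ll χs ηs u =
      (∏ i, ∑ x : kˣ, (χs i * χ ^ kk i) (x : k) * ψ x) *
        ∏ j, ∑ y : k'ˣ, ((ηs j * χ ^ ll j).comap (Algebra.norm k : k' →* k)) (y : k') *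
          ψ.compAddMonoidHom (Algebra.trace k k').toAddMonoidHom y := by
  calc ∑ u : kˣ, χ u * Kl (k' := k') ψ kk ll χs ηs u
      = ∑ x : Fin n → kˣ, ∑ y : Fin m → k'ˣ,
          χ ↑((∏ i, x i ^ kk i) * ∏ j, Units.map (Algebra.norm k : k' →* k) (y j) ^ ll j) *
            (ψ (∑ i, (x i : k)) * ψ (Algebra.trace k k' (∑ j, (y j : k'))) *
              (∏ i, χs i (x i)) * ∏ j, ηs j (Algebra.norm k (y j : k'))) := by
        simp only [Kl, mul_sum, mul_ite, mul_zero]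
        rw [sum_comm]
        refine sum_congr rfl fun x _ => ?_
        rw [sum_comm]
        simp
    _ = ∑ x : Fin n → kˣ, ∑ y : Fin m → k'ˣ,
          (∏ i, (χs i * χ ^ kk i) (x i : k) * ψ (x i)) *
            ∏ j, ((ηs j * χ ^ ll j).comap (Algebra.norm k : k' →* k)) (y j : k') *
              ψ.compAddMonoidHom (Algebra.trace k k').toAddMonoidHom (y j) := by
        refine sum_congr rfl fun x _ => sum_congr rfl fun y _ => ?_
        -- Keeping the norms as units lets `pow_apply_coe` evaluate `χ ^ l` without `l ≠ 0`.
        have hN : ∀ j, Algebra.norm k (y j : k') = Units.map (Algebra.norm k : k' →* k) (y j) :=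
          fun j => rfl
        simp only [hN, Units.val_mul, Units.coe_prod, Units.val_pow_eq_pow_val, map_mul,
          map_prod, map_pow, map_sum, AddChar.map_sum_eq_prod, MulChar.mul_apply,
          MulChar.comap_apply_coe, MulChar.pow_apply_coe, prod_mul_distrib,
          AddChar.compAddMonoidHom_apply, LinearMap.toAddMonoidHom_coe]
        ring
    _ = _ := by rw [Fintype.prod_sum, Fintype.prod_sum, sum_mul_sum]

theorem kloosterman_not_constant_general {k k' : Type*} [Field k] [Fintype k] [DecidableEq k]
    [Field k'] [Fintype k'] [DecidableEq k'] [Algebra k k']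
    (hq : 2 < Fintype.card k)
    (ψ : AddChar k ℂ) (hψ : ∃ a : k, ψ a ≠ 1)
    {n m : ℕ} (kk : Fin n → ℕ)
    (ll : Fin m → ℕ)
    (χs : Fin n → MulChar k ℂ) (ηs : Fin m → MulChar k ℂ) :
    ∃ u v : kˣ, Kl (k' := k') ψ kk ll χs ηs u ≠ Kl (k' := k') ψ kk ll χs ηs v := by
  obtain ⟨χ, hχ⟩ := MulChar.exists_ne_one_of_two_lt_card (R := ℂ) hq
  have hψ₁ : ψ ≠ 1 := AddChar.ne_one_iff.mpr hψ
  have hψ'₁ : ψ.compAddMonoidHom (Algebra.trace k k').toAddMonoidHom ≠ 1 :=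
    AddChar.compAddMonoidHom_ne_one hψ₁ (Algebra.trace_surjective k k')
  by_contra! hconst
  have hzero : ∑ u : kˣ, χ u * Kl (k' := k') ψ kk ll χs ηs u = 0 := by
    simp_rw [hconst _ 1, ← sum_mul, MulChar.sum_units_eq_zero_of_ne_one hχ, zero_mul]
  rw [sum_mulChar_mul_Kl] at hzero
  exact mul_ne_zero
    (prod_ne_zero_iff.mpr fun i _ => MulChar.sum_units_mul_addChar_ne_zero hψ₁ _)
    (prod_ne_zero_iff.mpr fun j _ => MulChar.sum_units_mul_addChar_ne_zero hψ'₁ _) hzero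

/-- **Non-constancy of generalized Kloosterman sums.**
If `q > 2`, the function `u ↦ Kl_u^{n;m}(ψ; (k₁,…,kₙ;l₁,…,l_m), (χ₁,…,χₙ;η₁,…,η_m))`
on `k^×` is not constant. -/
theorem kloosterman_not_constant {k k' : Type*} [Field k] [Fintype k] [DecidableEq k]
    [Field k'] [Fintype k'] [DecidableEq k'] [Algebra k k']
    (h2 : Module.finrank k k' = 2)
    (hq : 2 < Fintype.card k)
    (ψ : AddChar k ℂ) (hψ : ∃ a : k, ψ a ≠ 1)
    {n m : ℕ} (kk : Fin n → ℕ) (hkk : ∀ i, 0 < kk i)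
    (ll : Fin m → ℕ) (hll : ∀ j, 0 < ll j)
    (χs : Fin n → MulChar k ℂ) (ηs : Fin m → MulChar k ℂ) :
    ∃ u v : kˣ, Kl (k' := k') ψ kk ll χs ηs u ≠ Kl (k' := k') ψ kk ll χs ηs v :=
  kloosterman_not_constant_general hq ψ hψ kk ll χs ηs
end

section
/- There exists u ∈ k^× such that Kl_u^{n;m}(ψ; (k₁,…,k_n; l₁,…,l_m), (χ₁,…,χ_n; η₁,…,η_m)) ≠ 0. (Proposition on Kloosterman sums, part (3).) -/
open scoped BigOperators

lemma addChar_sum_eq_prod {F : Type*} [AddCommMonoid F] (ψ : AddChar F ℂ)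
    {ι : Type*} (s : Finset ι) (f : ι → F) :
    ψ (∑ i ∈ s, f i) = ∏ i ∈ s, ψ (f i) := by
  induction s using Finset.cons_induction with
  | empty => simp
  | cons a s ha ih => rw [Finset.sum_cons, Finset.prod_cons, AddChar.map_add_eq_mul, ih]

lemma gauss_units_ne_zero {F : Type*} [Field F] [Fintype F] [DecidableEq F]
    (ψ : AddChar F ℂ) (hψ : ∃ a, ψ a ≠ 1) (χ : MulChar F ℂ) :
    (∑ x : Fˣ, ψ (x : F) * χ (x : F)) ≠ 0 := by
  have hψ1 : ψ ≠ 1 := by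
    rintro rfl; obtain ⟨a, ha⟩ := hψ; exact ha rfl
  have hunits : ∀ g : F → ℂ, ∑ x : Fˣ, g (x : F)
      = ∑ x ∈ (Finset.univ : Finset F).erase 0, g x := by
    intro g
    have h1 : ∑ x : Fˣ, g (x : F) = ∑ a : {a : F // a ≠ 0}, g (a : F) :=
      Fintype.sum_equiv unitsEquivNeZero _ _ (fun x => rfl)
    have h2 : ∑ x ∈ (Finset.univ : Finset F).erase 0, g x
        = ∑ a : {a : F // a ≠ 0}, g (a : F) :=
      Finset.sum_subtype _ (by simp) g
    rw [h1, ← h2]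
  by_cases hχ : χ = 1
  · subst hχ
    have he : ∀ x : Fˣ, ψ (x : F) * (1 : MulChar F ℂ) (x : F) = ψ (x : F) := by
      intro x; rw [MulChar.one_apply (x.isUnit), mul_one]
    rw [Finset.sum_congr rfl (fun x _ => he x), hunits,
      Finset.sum_erase_eq_sub (Finset.mem_univ 0)]
    have hz : ∑ x : F, ψ x = 0 := by
      rw [AddChar.sum_eq_ite]
      exact if_neg (by exact hψ1)
    rw [hz, AddChar.map_zero_eq_one, zero_sub]
    simp
  · have hg : gaussSum χ ψ ≠ 0 := by
      refine gaussSum_ne_zero_of_nontrivial ?_ hχ (AddChar.IsPrimitive.of_ne_one hψ1)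
      exact_mod_cast Nat.cast_ne_zero.mpr Fintype.card_ne_zero
    have he : ∑ x : Fˣ, ψ (x : F) * χ (x : F) = gaussSum χ ψ := by
      rw [gaussSum, hunits (fun a => ψ a * χ a),
        Finset.sum_erase _ (by simp [χ.map_nonunit not_isUnit_zero])]
      exact Finset.sum_congr rfl fun x _ => mul_comm _ _
    rw [he]; exact hg

lemma klSum_collapse {α β γ : Type*} [Fintype α] [Fintype β] [Fintype γ] [DecidableEq γ]
    (P : α → β → γ) (t : α → β → ℂ) :
    ∑ u : γ, ∑ x : α, ∑ y : β, (if P x y = u then t x y else 0) = ∑ x, ∑ y, t x y := by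
  rw [Finset.sum_comm]
  refine Finset.sum_congr rfl fun x _ => ?_
  rw [Finset.sum_comm]
  refine Finset.sum_congr rfl fun y _ => ?_
  rw [Finset.sum_ite_eq, if_pos (Finset.mem_univ _)]

/-- **Non-vanishing of generalized Kloosterman sums.**
There exists `u ∈ k^×` with `Kl_u^{n;m}(ψ; (k₁,…,kₙ;l₁,…,l_m), (χ₁,…,χₙ;η₁,…,η_m)) ≠ 0`. -/
theorem kloosterman_exists_ne_zero {k k' : Type*} [Field k] [Fintype k] [DecidableEq k]
    [Field k'] [Fintype k'] [DecidableEq k'] [Algebra k k']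
    (h2 : Module.finrank k k' = 2)
    (ψ : AddChar k ℂ) (hψ : ∃ a : k, ψ a ≠ 1)
    {n m : ℕ} (kk : Fin n → ℕ) (hkk : ∀ i, 0 < kk i)
    (ll : Fin m → ℕ) (hll : ∀ j, 0 < ll j)
    (χs : Fin n → MulChar k ℂ) (ηs : Fin m → MulChar k ℂ) :
    ∃ u : kˣ, Kl (k' := k') ψ kk ll χs ηs u ≠ 0 := by
  classical
  haveI : FiniteDimensional k k' := FiniteDimensional.of_finrank_eq_succ h2
  haveI : Algebra.IsSeparable k k' := inferInstance
  set ψ' : AddChar k' ℂ := ψ.compAddMonoidHom (Algebra.trace k k').toAddMonoidHom with hψ'def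
  have hψ' : ∃ a : k', ψ' a ≠ 1 := by
    obtain ⟨a, ha⟩ := hψ
    obtain ⟨b, hb⟩ := Algebra.trace_surjective k k' a
    exact ⟨b, by simpa [ψ', hb] using ha⟩
  set χ' : Fin m → MulChar k' ℂ := fun j =>
    { toFun := fun y => ηs j (Algebra.norm k y)
      map_one' := by simp
      map_mul' := fun a b => by simp [map_mul]
      map_nonunit' := fun a ha => by
        rw [isUnit_iff_ne_zero, not_not] at ha
        subst ha
        show ηs j (Algebra.norm k (0 : k')) = 0
        rw [Algebra.norm_zero]
        exact (ηs j).map_nonunit (by simp) } with hχ'def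
  have hψ'app : ∀ a : k', ψ' a = ψ (Algebra.trace k k' a) := fun a => rfl
  have hχ'app : ∀ (j : Fin m) (a : k'), χ' j a = ηs j (Algebra.norm k a) := fun j a => rfl
  have key : ∑ u : kˣ, Kl (k' := k') ψ kk ll χs ηs u
      = (∏ i, ∑ x : kˣ, ψ (x : k) * χs i (x : k))
        * (∏ j, ∑ y : k'ˣ, ψ' (y : k') * χ' j (y : k')) := by
    unfold Kl
    rw [klSum_collapse]
    have hterm : ∀ (x : Fin n → kˣ) (y : Fin m → k'ˣ),
        ψ (∑ i, ((x i : k))) * ψ (Algebra.trace k k' (∑ j, ((y j : k')))) *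
          (∏ i, χs i ((x i : k))) * (∏ j, ηs j (Algebra.norm k ((y j : k'))))
        = (∏ i, ψ ((x i : k)) * χs i ((x i : k)))
          * ∏ j, ψ' ((y j : k')) * χ' j ((y j : k')) := by
      intro x y
      simp only [hψ'app, hχ'app]
      rw [addChar_sum_eq_prod, map_sum, addChar_sum_eq_prod,
        Finset.prod_mul_distrib, Finset.prod_mul_distrib]
      ring
    rw [Finset.sum_congr rfl fun x _ => Finset.sum_congr rfl fun y _ => hterm x y]
    rw [← Finset.sum_mul_sum]
    rw [← Finset.sum_prod_piFinset Finset.univ (fun i (a : kˣ) => ψ (a : k) * χs i (a : k)),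
      ← Finset.sum_prod_piFinset Finset.univ (fun j (a : k'ˣ) => ψ' (a : k') * χ' j (a : k')),
      Fintype.piFinset_univ, Fintype.piFinset_univ]
  by_contra h
  push_neg at h
  have hzero : ∑ u : kˣ, Kl (k' := k') ψ kk ll χs ηs u = 0 :=
    Finset.sum_eq_zero fun u _ => h u
  rw [key] at hzero
  exact (mul_ne_zero
    (Finset.prod_ne_zero_iff.mpr fun i _ => gauss_units_ne_zero ψ hψ (χs i))
    (Finset.prod_ne_zero_iff.mpr fun j _ => gauss_units_ne_zero ψ' hψ' (χ' j))) hzero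
end

section
/- Let p be a prime and let c ∈ K satisfy v(c) < 0 and p·v(p) + (p−1)·v(c) > 0. Suppose γ, γ' ∈ K satisfy γ^p − γ = c and (γ')^p − γ' = c. Then δ := γ − γ' satisfies v(δ) ≥ 0 and v(δ^p − δ) > 0; in other words, δ lies in the valuation ring of v and its residue is a root of X^p − X in the residue field, hence lies in the prime subfield 𝔽_p. (This is the paper's Lemma on differences of roots of the Artin–Schreier-type equation x^p − x = β^{p^e+1}, where K is an algebraic closure of a p-adic field and c = β^{p^e+1} has small negative valuation.) -/
/-!
Write `γ = γ' + δ`. Expanding `(γ' + δ)^p` gives `δ^p − δ = −p · ∑_{0<k<p} γ'^k δ^(p−k) (C(p,k)/p)`.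
Since `v γ' = v c / p < 0`, the hypothesis `p·v(p) + (p−1)·v(c) > 0` says `v p + k·v γ' > 0` for
`0 < k < p`, so every cross term has valuation `> (p−k)·v δ ≥ p·min(0, v δ)`. If `v δ < 0` this
contradicts `v(δ^p − δ) = p·v δ`; otherwise it is the claim `v(δ^p − δ) > 0`.
-/

open Finset

theorem WithTop.nsmul_lt_self_of_neg {a : WithTop ℝ} (ha : a < 0) {n : ℕ} (hn : 1 < n) :
    n • a < a := by
  lift a to ℝ using ha.ne_top
  norm_cast at ha ⊢
  rw [nsmul_eq_mul]
  have : (1 : ℝ) < n := by exact_mod_cast hn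
  nlinarith

theorem pow_sub_self_sub_eq_neg_sum {R : Type*} [CommRing R] {p : ℕ} (hp : p.Prime) {x y : R}
    (h : x ^ p - x = y ^ p - y) :
    (x - y) ^ p - (x - y) =
      -∑ k ∈ Ioo 0 p, (p : R) * (y ^ k * (x - y) ^ (p - k) * ↑(p.choose k / p)) := by
  have hexp := add_pow_prime_eq' hp y (x - y)
  rw [add_sub_cancel] at hexp
  rw [← mul_sum]
  linear_combination h - hexp

theorem nsmul_min_zero_lt_add_nsmul_add_nsmul {p k : ℕ} (hk : k ∈ Ioo 0 p) {w g d : WithTop ℝ}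
    (hw : 0 ≤ w) (hg : g < 0) (h : 0 < p • w + (p - 1) • p • g) :
    p • min 0 d < w + k • g + (p - k) • d := by
  obtain ⟨hk0, hkp⟩ := mem_Ioo.1 hk
  lift g to ℝ using hg.ne_top
  induction d using WithTop.recTopCoe with
  | top =>
    rw [show p - k = p - k - 1 + 1 by omega, succ_nsmul, WithTop.add_top, WithTop.add_top]
    simp
  | coe d =>
  rw [← WithTop.coe_zero, ← WithTop.coe_min, ← WithTop.coe_nsmul]
  induction w using WithTop.recTopCoe with
  | top => exact WithTop.coe_lt_top _
  | coe w =>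
  norm_cast at *
  simp only [nsmul_eq_mul] at *
  have hp : (0 : ℝ) < p := by exact_mod_cast hk0.trans hkp
  have hkp' : (k : ℝ) ≤ ↑(p - 1) := by exact_mod_cast Nat.le_sub_one_of_lt hkp
  have hpk : ((p - k : ℕ) : ℝ) = p - k := Nat.cast_sub hkp.le
  have hwg : 0 < w + ↑(p - 1) * g := pos_of_mul_pos_right (by linarith) hp.le
  have hkg : ↑(p - 1) * g ≤ k * g := mul_le_mul_of_nonpos_right hkp' hg.le
  have hmin : ↑p * min 0 d ≤ ↑(p - k) * d := by
    rw [hpk]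
    nlinarith [min_le_left 0 d, min_le_right 0 d]
  linarith

namespace AddValuation

section Ring

variable {R Γ₀ : Type*} [Ring R] [LinearOrderedAddCommMonoidWithTop Γ₀] (v : AddValuation R Γ₀)

theorem map_natCast_nonneg (n : ℕ) : 0 ≤ v n := by
  induction n with
  | zero => simp [map_zero]
  | succ n ih => rw [Nat.cast_succ]; exact v.map_le_add ih v.map_one.ge

theorem map_pow_sub_self_nonneg {x : R} (hx : 0 ≤ v x) (n : ℕ) : 0 ≤ v (x ^ n - x) :=
  v.map_le_sub (v.map_pow x n ▸ nsmul_nonneg hx n) hx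

end Ring

variable {R : Type*} [Ring R] (v : AddValuation R (WithTop ℝ)) {n : ℕ} {x : R}

theorem map_pow_sub_self_of_neg (hx : v x < 0) (hn : 1 < n) : v (x ^ n - x) = n • v x := by
  have hlt : v (x ^ n) < v x := v.map_pow x n ▸ WithTop.nsmul_lt_self_of_neg hx hn
  rw [v.map_sub_eq_of_lt_left hlt, v.map_pow]

theorem map_neg_of_map_pow_sub_self_neg (h : v (x ^ n - x) < 0) : v x < 0 :=
  not_le.1 fun hx => (v.map_pow_sub_self_nonneg hx n).not_gt h

theorem nonneg_and_pos_of_nsmul_min_lt (hn : 1 < n) (h : n • min 0 (v x) < v (x ^ n - x)) :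
    0 ≤ v x ∧ 0 < v (x ^ n - x) := by
  have hx : 0 ≤ v x := by
    by_contra! hx
    rw [v.map_pow_sub_self_of_neg hx hn, min_eq_right hx.le] at h
    exact h.false
  rw [min_eq_left hx, nsmul_zero] at h
  exact ⟨hx, h⟩

end AddValuation

/-- **Differences of roots of the Artin–Schreier-type equation `x^p − x = c`.**
Let `K` be a field with an additive valuation `v : K → ℝ ∪ {+∞}`, let `p` be a prime and
`c ∈ K` with `v(c) < 0` and `p·v(p) + (p−1)·v(c) > 0`. If `γ^p − γ = c` and `γ'^p − γ' = c`,
then `δ := γ − γ'` satisfies `v(δ) ≥ 0` and `v(δ^p − δ) > 0`; i.e. `δ` lies in the valuation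
ring and its residue is a root of `X^p − X`, hence lies in the prime subfield `𝔽_p`. -/
theorem artin_schreier_root_difference {K : Type*} [Field K]
    (v : K → WithTop ℝ)
    (h0 : ∀ x : K, v x = ⊤ ↔ x = 0)
    (hmul : ∀ x y : K, v (x * y) = v x + v y)
    (hadd : ∀ x y : K, min (v x) (v y) ≤ v (x + y))
    (p : ℕ) (hp : p.Prime)
    (c : K) (hc : v c < 0)
    (hpc : 0 < p • v ((p : K)) + (p - 1) • v c)
    (γ γ' : K) (hγ : γ ^ p - γ = c) (hγ' : γ' ^ p - γ' = c) :
    0 ≤ v (γ - γ') ∧ 0 < v ((γ - γ') ^ p - (γ - γ')) := by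
  let w : AddValuation K (WithTop ℝ) := AddValuation.of v ((h0 0).2 rfl)
    (WithTop.add_right_cancel ((h0 1).not.2 one_ne_zero) (by rw [zero_add, ← hmul, one_mul]))
    hadd hmul
  change 0 ≤ w (γ - γ') ∧ 0 < w ((γ - γ') ^ p - (γ - γ'))
  have hγ'_neg : w γ' < 0 := w.map_neg_of_map_pow_sub_self_neg (hγ' ▸ hc)
  have hvc : v c = p • w γ' := hγ' ▸ w.map_pow_sub_self_of_neg hγ'_neg hp.one_lt
  refine w.nonneg_and_pos_of_nsmul_min_lt hp.one_lt ?_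
  rw [pow_sub_self_sub_eq_neg_sum hp (hγ.trans hγ'.symm), w.map_neg]
  refine w.map_lt_sum' ((nsmul_le_nsmul_right (min_le_left _ _) p).trans_lt (by simp))
    fun k hk => (nsmul_min_zero_lt_add_nsmul_add_nsmul hk (w.map_natCast_nonneg p) hγ'_neg
      (hvc ▸ hpc)).trans_le ?_
  simp only [w.map_mul, w.map_pow, ← add_assoc]
  exact le_add_of_nonneg_right (w.map_natCast_nonneg _)
end

section
/- Define P(T) := ∏_{j=1}^{2n} (T − (1+φζ^j)/(1−φζ^j)) ∈ F̄[T]. Then P′(y)·P(−1) is a nonzero element of L, and P′(y)·P(−1) ≡ (2φ^{2n−1}/(1−φ)^{2n−1})·(2n/(1+φ)) modulo N_{L/K}(L^×); that is, there exists z ∈ L^× with P′(y)·P(−1) = (2φ^{2n−1}/(1−φ)^{2n−1})·(2n/(1+φ))·N_{L/K}(z). (Lemma computing P′(y_u)·P(−1) modulo norms, used in the evaluation of transfer factors.) -/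
/-!
The roots of `P` are the Cayley transforms `y_j = (1 + φζ^j)/(1 - φζ^j)`, and `y = y_0`, so
`P'(y) = ∏_{j ≠ 0} (y - y_j)`. With `y_a - y_b = 2(a - b)/((1 - a)(1 - b))`,
`∏_j (1 - xζ^j) = 1 - x^{2n}` and `∏_{j ≠ 0} (1 - ζ^j) = 2n`, both factors become explicit:
`P'(y)·P(-1) = (2φ)^{2n-1}·2n·(1 - φ)·2^{2n} / ((1 - φ)^{2n-1}(1 - c)^2)`. Writing
`1 - φ = (1 - φ²)/(1 + φ)`, its quotient by the target is `a²(1 - φ²) = N(a(1 + φ))` with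
`a = 2^{2n-1}/(1 - c) ∈ F`.
-/

open Polynomial Finset

theorem Polynomial.ne_one_of_irreducible_X_pow_sub_C {F : Type*} [Field F] {m : ℕ} {c : F}
    (hm : 2 ≤ m) (h : Irreducible (X ^ m - C c : F[X])) : c ≠ 1 := by
  rintro rfl
  have := degree_eq_one_of_irreducible_of_root h (x := 1) (by simp)
  rw [degree_X_pow_sub_C (by omega)] at this
  norm_cast at this
  omega

theorem Polynomial.eval_derivative_prod_range_succ_X_sub_C {R : Type*} [CommRing R]
    (f : ℕ → R) (k : ℕ) :
    (derivative (∏ j ∈ range (k + 1), (X - C (f j)))).eval (f 0) =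
      ∏ j ∈ range k, (f 0 - f (j + 1)) := by
  rw [prod_range_succ', derivative_mul, derivative_X_sub_C]
  simp [eval_prod]

theorem one_sub_mul_ne_zero_of_pow_ne_one {R : Type*} [CommRing R] {m : ℕ} {x ω : R}
    (hx : x ^ m ≠ 1) (hω : ω ^ m = 1) : 1 - x * ω ≠ 0 := by
  intro h
  apply hx
  calc x ^ m = (x * ω) ^ m := by rw [mul_pow, hω, mul_one]
    _ = 1 := by rw [← sub_eq_zero.mp h, one_pow]

theorem IsPrimitiveRoot.prod_one_sub_mul_pow {R : Type*} [CommRing R] [IsDomain R] {ζ : R}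
    {m : ℕ} (hζ : IsPrimitiveRoot ζ m) (hm : 0 < m) (x : R) :
    ∏ j ∈ range m, (1 - x * ζ ^ j) = 1 - x ^ m := by
  simpa [eval_prod, mul_comm] using congr_arg (eval 1) (X_pow_sub_C_eq_prod hζ hm rfl).symm

section Cayley

variable {E : Type*} [Field E]

def cayley (a : E) : E := (1 + a) / (1 - a)

theorem cayley_sub_cayley {a b : E} (ha : 1 - a ≠ 0) (hb : 1 - b ≠ 0) :
    cayley a - cayley b = 2 * (a - b) / ((1 - a) * (1 - b)) := by
  unfold cayley
  field_simp
  ring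

theorem neg_one_sub_cayley {b : E} (hb : 1 - b ≠ 0) : -1 - cayley b = -2 / (1 - b) := by
  unfold cayley
  field_simp
  ring

variable {m k : ℕ} {φ ζ : E}

theorem one_sub_mul_pow_ne_zero (hζ : IsPrimitiveRoot ζ m) (hφ : φ ^ m ≠ 1) (j : ℕ) :
    1 - φ * ζ ^ j ≠ 0 :=
  one_sub_mul_ne_zero_of_pow_ne_one hφ (by rw [pow_right_comm, hζ.pow_eq_one, one_pow])

theorem prod_cayley_sub_cayley (hζ : IsPrimitiveRoot ζ (k + 1)) (hφ : φ ^ (k + 1) ≠ 1) :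
    ∏ j ∈ range k, (cayley φ - cayley (φ * ζ ^ (j + 1))) =
      (2 * φ) ^ k * (k + 1) * (1 - φ) / ((1 - φ) ^ k * (1 - φ ^ (k + 1))) := by
  have h1φ : 1 - φ ≠ 0 := by simpa using one_sub_mul_pow_ne_zero hζ hφ 0
  have hsplit : (1 - φ) * ∏ j ∈ range k, (1 - φ * ζ ^ (j + 1)) = 1 - φ ^ (k + 1) := by
    rw [← hζ.prod_one_sub_mul_pow k.succ_pos, prod_range_succ', pow_zero, mul_one, mul_comm]
  calc ∏ j ∈ range k, (cayley φ - cayley (φ * ζ ^ (j + 1)))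
      = ∏ j ∈ range k, (2 * φ * (1 - ζ ^ (j + 1)) / ((1 - φ) * (1 - φ * ζ ^ (j + 1)))) :=
        prod_congr rfl fun j _ ↦ by
          rw [cayley_sub_cayley h1φ (one_sub_mul_pow_ne_zero hζ hφ _)]
          ring
    _ = (2 * φ) ^ k * (k + 1) / ((1 - φ) ^ k * ∏ j ∈ range k, (1 - φ * ζ ^ (j + 1))) := by
        rw [prod_div_distrib, prod_mul_distrib, prod_mul_distrib, prod_mul_distrib, prod_const,
          prod_const, prod_const, card_range, hζ.prod_one_sub_pow_eq_order, mul_pow]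
    _ = _ := by
        rw [← hsplit]
        field_simp

theorem prod_neg_one_sub_cayley (hζ : IsPrimitiveRoot ζ m) (hm : 0 < m) (hφ : φ ^ m ≠ 1) :
    ∏ j ∈ range m, (-1 - cayley (φ * ζ ^ j)) = (-2) ^ m / (1 - φ ^ m) := by
  rw [prod_congr rfl fun j _ ↦ neg_one_sub_cayley (one_sub_mul_pow_ne_zero hζ hφ j),
    prod_div_distrib, prod_const, card_range, hζ.prod_one_sub_mul_pow hm]

variable {P : E[X]}

theorem eval_derivative_mul_eval_neg_one (hζ : IsPrimitiveRoot ζ (k + 1))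
    (hφ : φ ^ (k + 1) ≠ 1) (hP : P = ∏ j ∈ range (k + 1), (X - C (cayley (φ * ζ ^ j)))) :
    (derivative P).eval (cayley φ) * P.eval (-1) =
      (2 * φ) ^ k * (k + 1) * (1 - φ) / ((1 - φ) ^ k * (1 - φ ^ (k + 1))) *
        ((-2) ^ (k + 1) / (1 - φ ^ (k + 1))) := by
  have hderiv := eval_derivative_prod_range_succ_X_sub_C (fun j ↦ cayley (φ * ζ ^ j)) k
  simp only [pow_zero, mul_one] at hderiv
  rw [hP, hderiv, prod_cayley_sub_cayley hζ hφ, eval_prod]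
  simp only [eval_sub, eval_X, eval_C]
  rw [prod_neg_one_sub_cayley hζ k.succ_pos hφ]

theorem eval_derivative_mul_eval_neg_one_ne_zero [CharZero E] (hζ : IsPrimitiveRoot ζ (k + 1))
    (hφ₀ : φ ≠ 0) (hφ : φ ^ (k + 1) ≠ 1)
    (hP : P = ∏ j ∈ range (k + 1), (X - C (cayley (φ * ζ ^ j)))) :
    (derivative P).eval (cayley φ) * P.eval (-1) ≠ 0 := by
  have h1φ : 1 - φ ≠ 0 := by simpa using one_sub_mul_pow_ne_zero hζ hφ 0
  have h1φk : 1 - φ ^ (k + 1) ≠ 0 := sub_ne_zero.mpr hφ.symm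
  rw [eval_derivative_mul_eval_neg_one hζ hφ hP]
  simp [hφ₀, h1φ, h1φk, Nat.cast_add_one_ne_zero]

theorem eval_derivative_mul_eval_neg_one_eq_mul_norm (hζ : IsPrimitiveRoot ζ (k + 1))
    (hk : Even (k + 1)) (hφ : φ ^ (k + 1) ≠ 1)
    (hP : P = ∏ j ∈ range (k + 1), (X - C (cayley (φ * ζ ^ j)))) :
    (derivative P).eval (cayley φ) * P.eval (-1) =
      2 * φ ^ k / (1 - φ) ^ k * ((k + 1) / (1 + φ)) *
        ((2 ^ k / (1 - φ ^ (k + 1))) ^ 2 - (2 ^ k / (1 - φ ^ (k + 1))) ^ 2 * φ ^ 2) := by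
  have h1φ : 1 - φ ≠ 0 := by simpa using one_sub_mul_pow_ne_zero hζ hφ 0
  have h1φ' : 1 + φ ≠ 0 := by
    -- `1 + φ = 1 - φ * (-1)` and `(-1) ^ (k + 1) = 1`
    simpa using one_sub_mul_ne_zero_of_pow_ne_one hφ (hk.neg_one_pow (α := E))
  have h1φk : 1 - φ ^ (k + 1) ≠ 0 := sub_ne_zero.mpr hφ.symm
  rw [eval_derivative_mul_eval_neg_one hζ hφ hP, hk.neg_pow]
  field_simp
  ring

end Cayley

/-- **Computation of `P′(y)·P(−1)` modulo norms.** Let `F` be a field of characteristic zero,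
`n ≥ 1`, and `c ∈ F^×` with `X^{2n} − c` irreducible over `F`. Fix a root `φ` of `X^{2n} − c`
and a primitive `2n`-th root of unity `ζ` in an algebraic closure of `F`, and set
`L := F(φ)`, `K := F(φ²)` and `y := (1+φ)/(1−φ)`. Let
`P(T) := ∏_{j=1}^{2n} (T − (1+φζ^j)/(1−φζ^j))`. Then `P′(y)·P(−1)` is a nonzero element of
`L` and is congruent to `(2φ^{2n−1}/(1−φ)^{2n−1})·(2n/(1+φ))` modulo `N_{L/K}(L^×)`; here
`N_{L/K}(L^×) = {a² − b²φ² ≠ 0 : a, b ∈ K}` since `L = K(φ)` with `φ² ∈ K` and `[L:K] = 2`. -/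
theorem pval_mod_norms {F : Type*} [Field F] [CharZero F]
    (n : ℕ) (hn : 1 ≤ n) (c : F) (hc : c ≠ 0)
    (hirr : Irreducible (X ^ (2 * n) - C c : F[X]))
    (φ ζ : AlgebraicClosure F)
    (hφ : φ ^ (2 * n) = algebraMap F (AlgebraicClosure F) c)
    (hζ : IsPrimitiveRoot ζ (2 * n))
    (P : Polynomial (AlgebraicClosure F))
    (hP : P = ∏ j ∈ Finset.range (2 * n), (X - C ((1 + φ * ζ ^ j) / (1 - φ * ζ ^ j)))) :
    (Polynomial.derivative P).eval ((1 + φ) / (1 - φ)) * P.eval (-1) ∈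
        IntermediateField.adjoin F {φ} ∧
    (Polynomial.derivative P).eval ((1 + φ) / (1 - φ)) * P.eval (-1) ≠ 0 ∧
    ∃ a b : AlgebraicClosure F,
      a ∈ IntermediateField.adjoin F {φ ^ 2} ∧ b ∈ IntermediateField.adjoin F {φ ^ 2} ∧
      a ^ 2 - b ^ 2 * φ ^ 2 ≠ 0 ∧
      (Polynomial.derivative P).eval ((1 + φ) / (1 - φ)) * P.eval (-1) =
        (2 * φ ^ (2 * n - 1) / (1 - φ) ^ (2 * n - 1)) *
          ((2 * n : AlgebraicClosure F) / (1 + φ)) * (a ^ 2 - b ^ 2 * φ ^ 2) := by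
  obtain ⟨k, hk⟩ : ∃ k, 2 * n = k + 1 := ⟨2 * n - 1, by omega⟩
  have hφ₀ : φ ≠ 0 := by
    rintro rfl
    exact hc (by simpa [hk] using hφ.symm)
  have hφ₁ : φ ^ (k + 1) ≠ 1 := by
    rw [← hk, hφ, map_ne_one_iff _ (algebraMap F _).injective]
    exact ne_one_of_irreducible_X_pow_sub_C (by omega) hirr
  rw [hk] at hζ hP
  set a := algebraMap F (AlgebraicClosure F) (2 ^ k / (1 - c))
  have ha : a = 2 ^ k / (1 - φ ^ (k + 1)) := by simp [a, ← hk, hφ, map_ofNat]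
  -- `cayley` unfolds to the quotients written in the statement, so the lemmas apply up to `rfl`
  have hnorm : (derivative P).eval ((1 + φ) / (1 - φ)) * P.eval (-1) = _ :=
    eval_derivative_mul_eval_neg_one_eq_mul_norm hζ ⟨n, by omega⟩ hφ₁ hP
  have hne : (derivative P).eval ((1 + φ) / (1 - φ)) * P.eval (-1) ≠ 0 :=
    eval_derivative_mul_eval_neg_one_ne_zero hζ hφ₀ hφ₁ hP
  rw [← ha] at hnorm
  have hcast : (2 * n : AlgebraicClosure F) = k + 1 := by exact_mod_cast hk
  rw [show 2 * n - 1 = k by omega, hcast]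
  refine ⟨?_, hne, a, a, IntermediateField.algebraMap_mem _ _,
    IntermediateField.algebraMap_mem _ _, right_ne_zero_of_mul (hnorm ▸ hne), hnorm⟩
  rw [hnorm]
  apply_rules [mul_mem, div_mem, inv_mem, pow_mem, add_mem, sub_mem, one_mem, ofNat_mem,
    natCast_mem, IntermediateField.mem_adjoin_simple_self, IntermediateField.algebraMap_mem]
end

section
/- Let V be a finite-dimensional real vector space, l ≥ 0 an integer, and α₀, α₁, …, α_l : V → ℝ affine functions. Suppose there exist real numbers b₀,…,b_l > 0 and e > 0 such that Σ_{i=0}^{l} b_i·α_i is the constant function with value 1/e, and suppose that for every index j ∈ {0,…,l} the functions {α_i : i ≠ j} have a common zero in V. Set h := e·(b₀+⋯+b_l). Then for every x ∈ V with α_i(x) ≥ 0 for all i, there exists y ∈ V such that α_i(y) ≥ 0 for all i and α_i(y) = 0 for every i with α_i(x) < 1/h. (Abstract form of the paper's Lemma on points of the closed alcove.) -/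
open scoped BigOperators

/-- **Points of the closed alcove (abstract form).** Let `V` be a finite-dimensional real
vector space and `α₀, …, α_l : V → ℝ` affine functions. Suppose there are `b₀, …, b_l > 0`
and `e > 0` with `Σᵢ bᵢ·αᵢ` constant of value `1/e`, and that for every `j` the family
`{αᵢ : i ≠ j}` has a common zero. Set `h := e·(b₀+⋯+b_l)`. Then for every `x` with
`αᵢ(x) ≥ 0` for all `i`, there is `y` with `αᵢ(y) ≥ 0` for all `i` and `αᵢ(y) = 0` for
every `i` with `αᵢ(x) < 1/h`. -/
theorem closed_alcove_point {V : Type*} [AddCommGroup V] [Module ℝ V]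
    [FiniteDimensional ℝ V]
    (l : ℕ) (α : Fin (l + 1) → (V →ᵃ[ℝ] ℝ))
    (b : Fin (l + 1) → ℝ) (hb : ∀ i, 0 < b i)
    (e : ℝ) (he : 0 < e)
    (hsum : ∀ v : V, ∑ i, b i * α i v = 1 / e)
    (hvert : ∀ j : Fin (l + 1), ∃ v : V, ∀ i, i ≠ j → α i v = 0)
    (x : V) (hx : ∀ i, 0 ≤ α i x) :
    ∃ y : V, (∀ i, 0 ≤ α i y) ∧ ∀ i, α i x < 1 / (e * ∑ i, b i) → α i y = 0 := by
  have hbsum : 0 < ∑ i, b i := Finset.sum_pos (fun i _ => hb i) Finset.univ_nonempty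
  have hh : 0 < e * ∑ i, b i := mul_pos he hbsum
  -- there exists j with α j x ≥ 1/h
  have hj : ∃ j : Fin (l + 1), 1 / (e * ∑ i, b i) ≤ α j x := by
    by_contra hcon
    push_neg at hcon
    have : ∑ i, b i * α i x < ∑ i, b i * (1 / (e * ∑ i, b i)) :=
      Finset.sum_lt_sum_of_nonempty Finset.univ_nonempty
        (fun i _ => by exact mul_lt_mul_of_pos_left (hcon i) (hb i))
    rw [hsum, ← Finset.sum_mul] at this
    have heq : (∑ i, b i) * (1 / (e * ∑ i, b i)) = 1 / e := by
      field_simp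
    rw [heq] at this
    exact lt_irrefl _ this
  obtain ⟨j, hjx⟩ := hj
  obtain ⟨v, hv⟩ := hvert j
  -- α j v = 1 / (e * b j)
  have hsv := hsum v
  have hsv' : b j * α j v = 1 / e := by
    rw [← hsv]
    rw [Finset.sum_eq_single j]
    · intro i _ hij
      rw [hv i hij, mul_zero]
    · intro h; exact absurd (Finset.mem_univ j) h
  have hαjv : 0 ≤ α j v := by
    have h1 : (0:ℝ) < 1 / e := by positivity
    nlinarith [hb j, hsv']
  refine ⟨v, fun i => ?_, fun i hi => ?_⟩
  · rcases eq_or_ne i j with rfl | hij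
    · exact hαjv
    · rw [hv i hij]
  · have hij : i ≠ j := by
      rintro rfl
      exact absurd hjx (not_le.mpr hi)
    exact hv i hij
end
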